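/- arXiv:2205.00730 — 3 statements merged into one kernel-verified Lean document; each statement's English description precedes it below -/
import Mathlib

section
/- Let f_p : [0,1] → ℝ be a family of continuous convex functions indexed by a set P, and suppose f(t) = sup_{p ∈ P} f_p(t) is finite for all t ∈ [0,1]. Then f is continuous on [0,1]. -/
theorem stmt_5 {P : Type*} [Nonempty P] (f : P → ℝ → ℝ)
    (hconv : ∀ p, ConvexOn ℝ (Set.Icc (0 : ℝ) 1) (f p))
    (hcont : ∀ p, ContinuousOn (f p) (Set.Icc (0 : ℝ) 1))
    (hbdd : ∀ t ∈ Set.Icc (0 : ℝ) 1, BddAbove (Set.range fun p => f p t)) :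
    ContinuousOn (fun t => ⨆ p, f p t) (Set.Icc (0 : ℝ) 1) := by
  set g : ℝ → ℝ := fun t => ⨆ p, f p t with hg
  have hle : ∀ t ∈ Set.Icc (0:ℝ) 1, ∀ p, f p t ≤ g t := fun t ht p =>
    le_ciSup (hbdd t ht) p
  have hgconv : ConvexOn ℝ (Set.Icc (0:ℝ) 1) g := by
    refine ⟨convex_Icc 0 1, fun x hx y hy a b ha hb hab => ?_⟩
    refine ciSup_le fun p => ?_
    calc f p (a • x + b • y) ≤ a • f p x + b • f p y := (hconv p).2 hx hy ha hb hab
      _ ≤ a • g x + b • g y := by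
          have h1 := hle x hx p
          have h2 := hle y hy p
          simp only [smul_eq_mul]
          nlinarith
  -- affine upper bound
  have key : ∀ t ∈ Set.Icc (0:ℝ) 1, g t ≤ (1 - t) * g 0 + t * g 1 := by
    intro t ht
    have h := hgconv.2 (Set.left_mem_Icc.2 zero_le_one) (Set.right_mem_Icc.2 zero_le_one)
      (by linarith [ht.2] : (0:ℝ) ≤ 1 - t) ht.1 (by ring)
    simpa [smul_eq_mul] using h
  -- lower semicontinuity
  have hlsc : ∀ x ∈ Set.Icc (0:ℝ) 1, ∀ y < g x,
      ∀ᶠ t in nhdsWithin x (Set.Icc (0:ℝ) 1), y < g t := by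
    intro x hx y hy
    obtain ⟨p, hp⟩ := (lt_ciSup_iff (hbdd x hx)).1 hy
    have h1 : ∀ᶠ t in nhdsWithin x (Set.Icc (0:ℝ) 1), y < f p t :=
      (hcont p x hx).eventually (eventually_gt_nhds hp)
    filter_upwards [h1, self_mem_nhdsWithin] with t h1t h2t
    exact lt_of_lt_of_le h1t (hle t h2t p)
  intro x hx
  rcases eq_or_lt_of_le hx.1 with h0 | h0
  · -- x = 0
    subst h0
    rw [ContinuousWithinAt]
    refine tendsto_order.2 ⟨fun a ha => hlsc 0 hx a ha, fun a ha => ?_⟩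
    have hc : Continuous fun t : ℝ => (1 - t) * g 0 + t * g 1 := by continuity
    have h1 : Filter.Tendsto (fun t : ℝ => (1 - t) * g 0 + t * g 1)
        (nhdsWithin 0 (Set.Icc (0:ℝ) 1)) (nhds (g 0)) := by
      have := (hc.tendsto 0).mono_left (nhdsWithin_le_nhds (s := Set.Icc (0:ℝ) 1))
      simpa using this
    filter_upwards [h1.eventually (eventually_lt_nhds ha), self_mem_nhdsWithin] with t h1t h2t
    exact lt_of_le_of_lt (key t h2t) h1t
  rcases eq_or_lt_of_le hx.2 with h1 | h1
  · -- x = 1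
    subst h1
    rw [ContinuousWithinAt]
    refine tendsto_order.2 ⟨fun a ha => hlsc 1 (by norm_num) a ha, fun a ha => ?_⟩
    have hc : Continuous fun t : ℝ => (1 - t) * g 0 + t * g 1 := by continuity
    have h2 : Filter.Tendsto (fun t : ℝ => (1 - t) * g 0 + t * g 1)
        (nhdsWithin 1 (Set.Icc (0:ℝ) 1)) (nhds (g 1)) := by
      have := (hc.tendsto 1).mono_left (nhdsWithin_le_nhds (s := Set.Icc (0:ℝ) 1))
      simpa using this
    filter_upwards [h2.eventually (eventually_lt_nhds ha), self_mem_nhdsWithin] with t h1t h2t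
    exact lt_of_le_of_lt (key t h2t) h1t
  · -- interior
    have hio : ContinuousOn g (Set.Ioo (0:ℝ) 1) := by
      have := hgconv.continuousOn_interior
      simpa [interior_Icc] using this
    exact ((hio.continuousAt (Ioo_mem_nhds h0 h1)).continuousWithinAt)
end

section
/- For every integer n ≥ 1, the quantity c_n = ((n+1)^n / n!) · ( (n+1)·∑_{k=1}^n 1/k − n + log(π^n/n!) ) is strictly positive. -/
open Real Finset

theorem stmt_10 (n : ℕ) (hn : 1 ≤ n) :
    0 < (((n : ℝ) + 1) ^ n / (Nat.factorial n : ℝ)) *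
        (((n : ℝ) + 1) * (∑ k ∈ Finset.Icc 1 n, (1 : ℝ) / k) - n +
          Real.log (π ^ n / (Nat.factorial n : ℝ))) := by
  have hfac : (0 : ℝ) < (Nat.factorial n : ℝ) := by positivity
  have hfirst : (0 : ℝ) < ((n : ℝ) + 1) ^ n / (Nat.factorial n : ℝ) := by positivity
  have hn1 : (1 : ℝ) ≤ (n : ℝ) := by exact_mod_cast hn
  apply mul_pos hfirst
  -- rewrite the sum as harmonic n
  have hsum : (∑ k ∈ Finset.Icc 1 n, (1 : ℝ) / k) = ((harmonic n : ℚ) : ℝ) := by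
    rw [harmonic_eq_sum_Icc]
    push_cast
    simp [one_div]
  have hH : Real.log ((n : ℝ) + 1) ≤ ((harmonic n : ℚ) : ℝ) := by
    have := log_add_one_le_harmonic n
    push_cast at this ⊢
    convert this using 2
  -- log of the quotient
  have hlogdiv : Real.log (π ^ n / (Nat.factorial n : ℝ))
      = n * Real.log π - Real.log (Nat.factorial n : ℝ) := by
    rw [Real.log_div (by positivity) (ne_of_gt hfac), Real.log_pow]
  -- log n! ≤ n log n
  have hfacpow : (Nat.factorial n : ℝ) ≤ (n : ℝ) ^ n := by
    exact_mod_cast Nat.factorial_le_pow n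
  have hlogfac : Real.log (Nat.factorial n : ℝ) ≤ n * Real.log n := by
    calc Real.log (Nat.factorial n : ℝ) ≤ Real.log ((n : ℝ) ^ n) :=
          Real.log_le_log hfac hfacpow
      _ = n * Real.log n := Real.log_pow n n
  -- log π > 1
  have hpi : (1 : ℝ) < Real.log π := by
    rw [Real.lt_log_iff_exp_lt Real.pi_pos]
    calc Real.exp 1 < 2.7182818286 := Real.exp_one_lt_d9
      _ < 3.141592 := by norm_num
      _ < π := Real.pi_gt_d6
  have hlog1 : Real.log (n : ℝ) ≤ Real.log ((n : ℝ) + 1) :=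
    Real.log_le_log (by linarith) (by linarith)
  have hlogpos : 0 < Real.log ((n : ℝ) + 1) :=
    Real.log_pos (by linarith)
  rw [hsum, hlogdiv]
  have hnn : (0 : ℝ) ≤ (n : ℝ) := by positivity
  nlinarith [mul_le_mul_of_nonneg_left hH (by linarith : (0:ℝ) ≤ (n:ℝ) + 1),
    mul_le_mul_of_nonneg_left hlog1 hnn,
    mul_lt_mul_of_pos_left hpi (lt_of_lt_of_le one_pos hn1)]
end

section
/- Let N ≥ 2 and let X = X_1 × ⋯ × X_M (M ≥ 2) with each X_i a K-semistable Fano variety of dimension n_i ≥ 1, ∑ n_i = N, and assume vol(X_i) ≤ (n_i+1)^{n_i}/n_i! for each i. Then vol(X) = ∏ vol(X_i) ≤ 2·N^{N-1}/(N-1)! . -/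
open Finset

noncomputable def fvol (n : ℕ) : ℝ := ((n : ℝ) + 1) ^ n / (Nat.factorial n : ℝ)

lemma fvol_pos (n : ℕ) : 0 < fvol n := by
  unfold fvol; positivity

lemma fvol_zero : fvol 0 = 1 := by simp [fvol]

lemma fvol_one : fvol 1 = 2 := by norm_num [fvol]

noncomputable def hrat (n : ℕ) : ℝ := (((n : ℝ) + 2) / ((n : ℝ) + 1)) ^ (n + 1)

lemma hrat_pos (n : ℕ) : 0 < hrat n := by unfold hrat; positivity

lemma fvol_succ (n : ℕ) : fvol (n + 1) = fvol n * hrat n := by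
  unfold fvol hrat
  rw [Nat.factorial_succ]
  push_cast
  rw [div_pow]
  have h1 : ((n : ℝ) + 1) ≠ 0 := by positivity
  have h2 : (Nat.factorial n : ℝ) ≠ 0 := by positivity
  field_simp
  ring

lemma hrat_mono : Monotone hrat := by
  apply monotone_nat_of_le_succ
  intro n
  unfold hrat
  push_cast
  have e1 : ((n:ℝ) + 1 + 2) = (n:ℝ) + 3 := by ring
  have e2 : ((n:ℝ) + 1 + 1) = (n:ℝ) + 2 := by ring
  rw [e1, e2]
  set k : ℝ := (n : ℝ) + 1 with hk
  have hn0 : (0:ℝ) ≤ (n:ℝ) := Nat.cast_nonneg n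
  have hkpos : 0 < k := by rw [hk]; linarith
  have hk1 : 0 < k + 1 := by linarith
  have hk2 : 0 < k + 2 := by linarith
  have e3 : ((n:ℝ) + 2) = k + 1 := by rw [hk]; ring
  have e4 : ((n:ℝ) + 3) = k + 2 := by rw [hk]; ring
  rw [e3, e4]
  -- goal: ((k+1)/k)^(n+1) ≤ ((k+2)/(k+1))^(n+1+1)
  set m : ℝ := k * (k + 2) with hm
  have hmpos : 0 < m := by positivity
  have hm1 : (1 : ℝ) ≤ m := by rw [hm, hk]; nlinarith
  have hb : 1 + (n + 1 : ℕ) * (-(1/m)) ≤ (1 + (-(1/m))) ^ (n + 1) := by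
    apply one_add_mul_le_pow
    have : 1 / m ≤ 1 := by rw [div_le_one hmpos]; exact hm1
    linarith
  have hsub : 1 - k / m = (k + 1) / (k + 2) := by
    rw [hm]; field_simp; ring
  have hb' : (k + 1) / (k + 2) ≤ (1 - 1/m) ^ (n + 1) := by
    have h2 : ((n:ℝ) + 1) * (1/m) = k / m := by rw [hk]; ring
    calc (k + 1) / (k + 2) = 1 - k / m := hsub.symm
      _ = 1 + ((n:ℝ) + 1) * (-(1/m)) := by rw [← h2]; ring
      _ ≤ (1 + (-(1/m))) ^ (n + 1) := by
          have := hb; push_cast at this; linarith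
      _ = (1 - 1/m) ^ (n + 1) := by ring_nf
  have hprodle : (1 + 1/m) ^ (n+1) * (1 - 1/m) ^ (n+1) ≤ 1 := by
    rw [← mul_pow]
    have h1 : (1 + 1/m) * (1 - 1/m) = 1 - 1/m^2 := by field_simp; ring
    rw [h1]
    apply pow_le_one₀
    · have : 1/m^2 ≤ 1 := by
        rw [div_le_one (by positivity)]; nlinarith
      linarith
    · have : 0 < 1/m^2 := by positivity
      linarith
  have hsubpos : 0 < (k + 1) / (k + 2) := by positivity
  have key : (1 + 1/m) ^ (n+1) ≤ (k + 2) / (k + 1) := by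
    have h1mpos : (0:ℝ) < (1 - 1/m) ^ (n+1) := lt_of_lt_of_le hsubpos hb'
    have hprodle' : (1 + 1/m) ^ (n+1) ≤ 1 / (1 - 1/m)^(n+1) :=
      (le_div_iff₀ h1mpos).mpr hprodle
    calc (1 + 1/m) ^ (n+1) ≤ 1 / (1 - 1/m)^(n+1) := hprodle'
      _ ≤ 1 / ((k+1)/(k+2)) := one_div_le_one_div_of_le hsubpos hb'
      _ = (k+2)/(k+1) := one_div_div _ _
  have hfactor : (k+1)/k = ((k+2)/(k+1)) * (1 + 1/m) := by
    rw [hm]; field_simp; ring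
  calc ((k+1)/k) ^ (n+1) = ((k+2)/(k+1))^(n+1) * (1 + 1/m)^(n+1) := by
        rw [hfactor, mul_pow]
    _ ≤ ((k+2)/(k+1))^(n+1) * ((k+2)/(k+1)) := by
        apply mul_le_mul_of_nonneg_left key (by positivity)
    _ = ((k+2)/(k+1)) ^ (n+1+1) := by rw [← pow_succ]

lemma fvol_mul (a b : ℕ) : fvol a * fvol b ≤ fvol (a + b) := by
  induction b with
  | zero => simp [fvol_zero]
  | succ b ih =>
    rw [fvol_succ, ← Nat.add_assoc, fvol_succ, ← mul_assoc]
    exact mul_le_mul ih (hrat_mono (Nat.le_add_left b a)) (hrat_pos b).le (fvol_pos _).le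

lemma fvol_mul_two (a b : ℕ) (ha : 1 ≤ a) (hb : 1 ≤ b) :
    fvol a * fvol b ≤ 2 * fvol (a + b - 1) := by
  induction b with
  | zero => omega
  | succ b ih =>
    rcases Nat.eq_or_lt_of_le hb with h1 | h1
    · have : b = 0 := by omega
      subst this
      rw [fvol_one]
      simp [mul_comm]
    · have hb1 : 1 ≤ b := by omega
      have ih' := ih hb1
      have heq : a + (b+1) - 1 = (a + b - 1) + 1 := by omega
      rw [heq, fvol_succ, fvol_succ, ← mul_assoc]
      have hle : b ≤ a + b - 1 := by omega
      have h2pos : (0:ℝ) ≤ 2 * fvol (a+b-1) := by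
        have := fvol_pos (a+b-1); linarith
      calc fvol a * fvol b * hrat b ≤ (2 * fvol (a+b-1)) * hrat (a+b-1) :=
            mul_le_mul ih' (hrat_mono hle) (hrat_pos b).le h2pos
        _ = 2 * (fvol (a+b-1) * hrat (a+b-1)) := by ring

lemma fvol_prod {M : Type*} (s : Finset M) (n : M → ℕ) :
    ∏ i ∈ s, fvol (n i) ≤ fvol (∑ i ∈ s, n i) := by
  induction s using Finset.cons_induction with
  | empty => simp [fvol_zero]
  | cons a s' ha ih =>
    rw [Finset.prod_cons, Finset.sum_cons]
    calc fvol (n a) * ∏ i ∈ s', fvol (n i) ≤ fvol (n a) * fvol (∑ i ∈ s', n i) :=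
          mul_le_mul_of_nonneg_left ih (fvol_pos _).le
      _ ≤ fvol (n a + ∑ i ∈ s', n i) := fvol_mul _ _

theorem stmt_13 (M N : ℕ) (hM : 2 ≤ M) (hN : 2 ≤ N)
    (n : Fin M → ℕ) (hn : ∀ i, 1 ≤ n i) (hsum : ∑ i, n i = N)
    (v : Fin M → ℝ) (hv0 : ∀ i, 0 ≤ v i)
    (hv : ∀ i, v i ≤ ((n i : ℝ) + 1) ^ (n i) / (Nat.factorial (n i) : ℝ)) :
    ∏ i, v i ≤ 2 * (N : ℝ) ^ (N - 1) / (Nat.factorial (N - 1) : ℝ) := by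
  have step1 : ∏ i, v i ≤ ∏ i, fvol (n i) :=
    Finset.prod_le_prod (fun i _ => hv0 i) (fun i _ => hv i)
  have hM0 : 0 < M := by omega
  have hM1 : 1 < M := by omega
  set i0 : Fin M := ⟨0, hM0⟩ with hi0
  set i1 : Fin M := ⟨1, hM1⟩ with hi1
  have hmem : i0 ∈ (Finset.univ : Finset (Fin M)) := Finset.mem_univ i0
  have hsplit : ∏ i, fvol (n i) = fvol (n i0) * ∏ i ∈ Finset.univ.erase i0, fvol (n i) :=
    (Finset.mul_prod_erase _ _ hmem).symm
  have hsumsplit : n i0 + ∑ i ∈ Finset.univ.erase i0, n i = N := by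
    rw [Finset.add_sum_erase _ _ hmem]; exact hsum
  set S := ∑ i ∈ Finset.univ.erase i0, n i with hS
  have hSpos : 1 ≤ S := by
    have hi1mem : i1 ∈ Finset.univ.erase i0 := by
      apply Finset.mem_erase.mpr
      exact ⟨Fin.ne_of_val_ne (by simp [hi0, hi1]), Finset.mem_univ _⟩
    calc 1 ≤ n i1 := hn i1
      _ ≤ S := Finset.single_le_sum (fun i _ => Nat.zero_le _) hi1mem
  have step2 : ∏ i ∈ Finset.univ.erase i0, fvol (n i) ≤ fvol S := fvol_prod _ _
  have step3 : fvol (n i0) * fvol S ≤ 2 * fvol (n i0 + S - 1) :=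
    fvol_mul_two _ _ (hn i0) hSpos
  have hNm1 : n i0 + S - 1 = N - 1 := by omega
  have final : ∏ i, fvol (n i) ≤ 2 * fvol (N - 1) := by
    rw [hsplit, ← hNm1]
    calc fvol (n i0) * ∏ i ∈ Finset.univ.erase i0, fvol (n i)
        ≤ fvol (n i0) * fvol S := mul_le_mul_of_nonneg_left step2 (fvol_pos _).le
      _ ≤ 2 * fvol (n i0 + S - 1) := step3
  have hcast : ((N - 1 : ℕ) : ℝ) + 1 = (N : ℝ) := by
    have h : (N - 1) + 1 = N := by omega
    calc ((N - 1 : ℕ) : ℝ) + 1 = (((N-1) + 1 : ℕ) : ℝ) := by push_cast; ring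
      _ = (N : ℝ) := by rw [h]
  have heq : 2 * fvol (N - 1) = 2 * (N : ℝ) ^ (N - 1) / (Nat.factorial (N - 1) : ℝ) := by
    unfold fvol
    rw [hcast]
    ring
  linarith [le_trans step1 final]
end
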